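/- Let f : W × Z → ℝ be convex and ρ-Lipschitz in its first argument over a convex set W, and λ > 0. The algorithm that, given a dataset S = (z₁, …, z_n), outputs the minimizer of (1/n)Σ_i f(w, z_i) + λ‖w‖² over W is (2ρ²/(λn))-uniformly stable. -/

import Mathlib

/-- Uniform stability of regularized empirical risk minimization. -/
theorem stmt6 {E Z : Type*} [NormedAddCommGroup E] [InnerProductSpace ℝ E]
    (W : Set E) (hWconv : Convex ℝ W) (hWne : W.Nonempty)
    (n : ℕ) (hn : 0 < n)
    (f : E → Z → ℝ) (ρ lam : ℝ) (hρ : 0 ≤ ρ) (hlam : 0 < lam)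
    (hconv : ∀ z : Z, ConvexOn ℝ W (fun w => f w z))
    (hLip : ∀ z : Z, ∀ u ∈ W, ∀ v ∈ W, |f u z - f v z| ≤ ρ * ‖u - v‖)
    (A : (Fin n → Z) → E)
    (hA : ∀ S : Fin n → Z, A S ∈ W ∧
      IsMinOn (fun w => (1 / (n : ℝ)) * ∑ i, f w (S i) + lam * ‖w‖ ^ 2) W (A S)) :
    ∀ S S' : Fin n → Z, (∃ k, ∀ i, i ≠ k → S i = S' i) →
      ∀ z : Z, f (A S) z - f (A S') z ≤ 2 * ρ ^ 2 / (lam * n) := by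
  rintro S S' ⟨k, hk⟩ z
  obtain ⟨huW, humin⟩ := hA S
  obtain ⟨hvW, hvmin⟩ := hA S'
  set u := A S
  set v := A S'
  have hnpos : (0:ℝ) < (n:ℝ) := by exact_mod_cast hn
  -- strong convexity estimate for the minimizer
  have key : ∀ (T : Fin n → Z) (p q : E), p ∈ W → q ∈ W →
      IsMinOn (fun w => (1 / (n : ℝ)) * ∑ i, f w (T i) + lam * ‖w‖ ^ 2) W p →
      lam / 2 * ‖p - q‖ ^ 2 ≤
        ((1 / (n : ℝ)) * ∑ i, f q (T i) + lam * ‖q‖ ^ 2)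
        - ((1 / (n : ℝ)) * ∑ i, f p (T i) + lam * ‖p‖ ^ 2) := by
    intro T p q hp hq hmin
    set m := (1/2:ℝ) • p + (1/2:ℝ) • q with hm
    have hmW : m ∈ W := hWconv hp hq (by norm_num) (by norm_num) (by norm_num)
    have hsum : ∑ i, f m (T i) ≤ ∑ i, ((1/2) * f p (T i) + (1/2) * f q (T i)) :=
      Finset.sum_le_sum fun i _ =>
        (hconv (T i)).2 hp hq (by norm_num) (by norm_num) (by norm_num)
    have hsum' : ∑ i, ((1/2) * f p (T i) + (1/2) * f q (T i))
        = (1/2) * ∑ i, f p (T i) + (1/2) * ∑ i, f q (T i) := by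
      rw [Finset.sum_add_distrib, ← Finset.mul_sum, ← Finset.mul_sum]
    have hnorm : ‖m‖ ^ 2 = (1/2)*‖p‖^2 + (1/2)*‖q‖^2 - (1/4)*‖p-q‖^2 := by
      have e1 : ‖p + q‖^2 = ‖p‖^2 + 2 * inner ℝ p q + ‖q‖^2 := @norm_add_sq_real E _ _ p q
      have e2 : ‖p - q‖^2 = ‖p‖^2 - 2 * inner ℝ p q + ‖q‖^2 := @norm_sub_sq_real E _ _ p q
      have e3 : m = (1/2:ℝ) • (p + q) := by rw [hm, smul_add]
      have e4 : ‖m‖ = (1/2) * ‖p+q‖ := by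
        rw [e3, norm_smul]; norm_num
      rw [e4]; nlinarith [e1, e2]
    have hmin' : (1 / (n : ℝ)) * ∑ i, f p (T i) + lam * ‖p‖ ^ 2 ≤
        (1 / (n : ℝ)) * ∑ i, f m (T i) + lam * ‖m‖ ^ 2 := hmin hmW
    have hninv : (0:ℝ) ≤ 1/(n:ℝ) := by positivity
    have hmul : (1 / (n : ℝ)) * ∑ i, f m (T i) ≤
        (1 / (n : ℝ)) * ((1/2) * ∑ i, f p (T i) + (1/2) * ∑ i, f q (T i)) := by
      rw [← hsum']
      exact mul_le_mul_of_nonneg_left hsum hninv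
    nlinarith [hmul, hmin', hnorm]
  have h1 := key S u v huW hvW humin
  have h2 := key S' v u hvW huW hvmin
  -- sums over S and S' differ only at k
  have hdiff : ∀ w : E, ∑ i, f w (S i) - ∑ i, f w (S' i) = f w (S k) - f w (S' k) := by
    intro w
    rw [← Finset.add_sum_erase _ (fun i => f w (S i)) (Finset.mem_univ k),
        ← Finset.add_sum_erase _ (fun i => f w (S' i)) (Finset.mem_univ k)]
    have : ∑ i ∈ Finset.univ.erase k, f w (S i)
        = ∑ i ∈ Finset.univ.erase k, f w (S' i) :=
      Finset.sum_congr rfl fun i hi => by rw [hk i (Finset.ne_of_mem_erase hi)]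
    rw [this]; ring
  have hnv : ‖v - u‖ = ‖u - v‖ := norm_sub_rev v u
  -- Lipschitz bounds
  have hL1 : f v (S k) - f u (S k) ≤ ρ * ‖u - v‖ := by
    have := hLip (S k) v hvW u huW
    rw [hnv] at this
    exact (le_abs_self _).trans this
  have hL2 : f u (S' k) - f v (S' k) ≤ ρ * ‖u - v‖ := by
    have := hLip (S' k) u huW v hvW
    exact (le_abs_self _).trans this
  have hninv : (0:ℝ) ≤ 1/(n:ℝ) := by positivity
  have E1 : (1/(n:ℝ)) * ∑ i, f v (S i) - (1/(n:ℝ)) * ∑ i, f v (S' i)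
      = (1/(n:ℝ)) * (f v (S k) - f v (S' k)) := by rw [← mul_sub, hdiff v]
  have E2 : (1/(n:ℝ)) * ∑ i, f u (S i) - (1/(n:ℝ)) * ∑ i, f u (S' i)
      = (1/(n:ℝ)) * (f u (S k) - f u (S' k)) := by rw [← mul_sub, hdiff u]
  have hL1' := mul_le_mul_of_nonneg_left hL1 hninv
  have hL2' := mul_le_mul_of_nonneg_left hL2 hninv
  have hsumineq : lam * ‖u - v‖ ^ 2 ≤ (1/(n:ℝ)) * (2 * ρ * ‖u - v‖) := by
    rw [hnv] at h2
    nlinarith [h1, h2, E1, E2, hL1', hL2']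
  have hs2 : lam * (n:ℝ) * ‖u - v‖ ^ 2 ≤ 2 * ρ * ‖u - v‖ := by
    have h := mul_le_mul_of_nonneg_left hsumineq hnpos.le
    have h' : (n:ℝ) * (1/(n:ℝ) * (2 * ρ * ‖u - v‖)) = 2 * ρ * ‖u - v‖ := by
      field_simp
    rw [h'] at h
    linarith [h]
  have hd : ‖u - v‖ ≤ 2 * ρ / (lam * n) := by
    rcases eq_or_lt_of_le (norm_nonneg (u - v)) with h0 | h0
    · rw [← h0]; positivity
    · rw [le_div_iff₀ (by positivity)]
      have h3 : lam * (n:ℝ) * ‖u - v‖ * ‖u - v‖ ≤ 2 * ρ * ‖u - v‖ := by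
        linarith [hs2, sq ‖u - v‖]
      have h4 := le_of_mul_le_mul_right h3 h0
      linarith [h4]
  have hfin : f u z - f v z ≤ ρ * ‖u - v‖ :=
    (le_abs_self _).trans (hLip z u huW v hvW)
  calc f u z - f v z ≤ ρ * ‖u - v‖ := hfin
    _ ≤ ρ * (2 * ρ / (lam * n)) := mul_le_mul_of_nonneg_left hd hρ
    _ = 2 * ρ ^ 2 / (lam * n) := by ring
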